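/- Let u be an associative Lyndon-Shirshov word of length at least 2, and let u = vw where w is the longest proper suffix of u that is itself an associative Lyndon-Shirshov word. Then the prefix v is also an associative Lyndon-Shirshov word. -/
import Mathlib


open List

/-- The lexicographic order used by Shirshov: a word is *greater* than any of its
proper extensions (`w > w ++ t` for `t ≠ []`), and otherwise words are compared
letterwise by the order on the alphabet.  `LSLt u v` means `u < v`. -/
def LSLt {X : Type*} [LinearOrder X] : List X → List X → Prop
  | _ :: _, [] => True
  | [], _ => False
  | a :: u, b :: v => a < b ∨ (a = b ∧ LSLt u v)

/-- `u ≤ v` in the Shirshov lexicographic order. -/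
def LSLe {X : Type*} [LinearOrder X] (u v : List X) : Prop := u = v ∨ LSLt u v

/-- The degree-lexicographic order: compare first by length, then lexicographically. -/
def DegLt {X : Type*} [LinearOrder X] (u v : List X) : Prop :=
  u.length < v.length ∨ (u.length = v.length ∧ LSLt u v)

/-- `≤` in the degree-lexicographic order. -/
def DegLe {X : Type*} [LinearOrder X] (u v : List X) : Prop := u = v ∨ DegLt u v

/-- An associative Lyndon–Shirshov word: a nonempty word `u` such that `vw > wv`
(lexicographically) for every factorization `u = vw` into nonempty parts. -/
def IsALSW {X : Type*} [LinearOrder X] (u : List X) : Prop :=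
  u ≠ [] ∧ ∀ v w : List X, v ≠ [] → w ≠ [] → u = v ++ w → LSLt (w ++ v) (v ++ w)

/-- `w` is the longest proper suffix of `u` which is an ALSW. -/
def LongestALSWProperSuffix {X : Type*} [LinearOrder X] (u w : List X) : Prop :=
  IsALSW w ∧ (∃ v : List X, v ≠ [] ∧ u = v ++ w) ∧
    ∀ w' : List X, IsALSW w' → (∃ v' : List X, v' ≠ [] ∧ u = v' ++ w') →
      w'.length ≤ w.length

section Aux
variable {X : Type*} [LinearOrder X]

theorem lslt_irrefl : ∀ (u : List X), ¬ LSLt u u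
  | [] => fun h => h
  | a :: u => fun h => by
      rcases h with h | ⟨-, h⟩
      · exact lt_irrefl _ h
      · exact lslt_irrefl u h

theorem lslt_trans : ∀ (a b c : List X), LSLt a b → LSLt b c → LSLt a c
  | [], _, _, h, _ => h.elim
  | _ :: _, [], _, _, h2 => h2.elim
  | _ :: _, _ :: _, [], _, _ => trivial
  | x :: a, y :: b, z :: c, h1, h2 => by
      rcases h1 with h1 | ⟨rfl, h1⟩ <;> rcases h2 with h2 | ⟨rfl, h2⟩
      · exact Or.inl (lt_trans h1 h2)
      · exact Or.inl h1
      · exact Or.inl h2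
      · exact Or.inr ⟨rfl, lslt_trans a b c h1 h2⟩

theorem lslt_total : ∀ (a b : List X), a = b ∨ LSLt a b ∨ LSLt b a
  | [], [] => Or.inl rfl
  | [], _ :: _ => Or.inr (Or.inr trivial)
  | _ :: _, [] => Or.inr (Or.inl trivial)
  | x :: a, y :: b => by
      rcases lt_trichotomy x y with h | rfl | h
      · exact Or.inr (Or.inl (Or.inl h))
      · rcases lslt_total a b with rfl | h | h
        · exact Or.inl rfl
        · exact Or.inr (Or.inl (Or.inr ⟨rfl, h⟩))
        · exact Or.inr (Or.inr (Or.inr ⟨rfl, h⟩))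
      · exact Or.inr (Or.inr (Or.inl h))

theorem lslt_asymm {a b : List X} (h1 : LSLt a b) (h2 : LSLt b a) : False :=
  lslt_irrefl a (lslt_trans a b a h1 h2)

theorem lslt_append_left : ∀ (p : List X) {x y : List X}, LSLt (p ++ x) (p ++ y) ↔ LSLt x y
  | [], x, y => Iff.rfl
  | c :: p, x, y => by
      constructor
      · rintro (h | ⟨-, h⟩)
        · exact absurd h (lt_irrefl c)
        · exact (lslt_append_left p).1 h
      · intro h
        exact Or.inr ⟨rfl, (lslt_append_left p).2 h⟩

theorem lslt_of_diff : ∀ (q : List X) {a b : X} {x y : List X}, a < b →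
    LSLt (q ++ a :: x) (q ++ b :: y)
  | [], a, b, x, y, h => Or.inl h
  | c :: q, a, b, x, y, h => Or.inr ⟨rfl, lslt_of_diff q h⟩

theorem lslt_cases : ∀ {x y : List X}, LSLt x y →
    (∃ q a b x' y', x = q ++ a :: x' ∧ y = q ++ b :: y' ∧ a < b) ∨
    (∃ t, t ≠ [] ∧ x = y ++ t)
  | [], _, h => h.elim
  | a :: x, [], _ => Or.inr ⟨a :: x, by simp⟩
  | a :: x, b :: y, h => by
      rcases h with h | ⟨rfl, h⟩
      · exact Or.inl ⟨[], a, b, x, y, rfl, rfl, h⟩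
      · rcases lslt_cases h with ⟨q, c, d, x', y', rfl, rfl, hcd⟩ | ⟨t, ht, rfl⟩
        · exact Or.inl ⟨a :: q, c, d, x', y', rfl, rfl, hcd⟩
        · exact Or.inr ⟨t, ht, rfl⟩

/-- Fact A: an ALSW is greater than each of its proper nonempty suffixes. -/
theorem lslt_suffix {p s : List X} (h : IsALSW (p ++ s)) (hp : p ≠ []) (hs : s ≠ []) :
    LSLt s (p ++ s) := by
  have hrot : LSLt (s ++ p) (p ++ s) := h.2 p s hp hs rfl
  rcases lslt_cases hrot with ⟨q, a, b, x', y', h1, h2, hab⟩ | ⟨t, ht, hext⟩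
  · by_cases hq : q.length + 1 ≤ s.length
    · -- s = (q ++ [a]) ++ s₂ for some s₂
      have hpre1 : q ++ [a] <+: s ++ p := ⟨x', by simpa using h1.symm⟩
      have hpre2 : q ++ [a] <+: s :=
        List.prefix_of_prefix_length_le hpre1 (List.prefix_append s p) (by simpa using hq)
      obtain ⟨s₂, hs₂⟩ := hpre2
      rw [h2, ← hs₂]
      have he : q ++ [a] ++ s₂ = q ++ a :: s₂ := by simp
      rw [he]
      exact lslt_of_diff q hab
    · -- border case: s is a proper prefix of p ++ s; derive a contradiction
      exfalso
      have hqpre : q <+: s ++ p := ⟨a :: x', h1.symm⟩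
      have hspre : s <+: q :=
        List.prefix_of_prefix_length_le (List.prefix_append s p) hqpre (by omega)
      have hspre2 : s <+: p ++ s := hspre.trans ⟨b :: y', h2.symm⟩
      obtain ⟨r, hr⟩ := hspre2
      have hlenr : p.length = r.length := by
        have := congrArg List.length hr
        simp at this; omega
      have hrne : r ≠ [] := by
        intro h0
        apply hp
        rw [h0] at hlenr
        simp at hlenr
        exact (by simpa using hlenr : p = [])
      have hrot2 : LSLt (r ++ s) (p ++ s) := by
        have h4 := h.2 s r hs hrne hr.symm
        rwa [hr] at h4
      have hpr : LSLt p r := by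
        have h3 := hrot
        rw [← hr] at h3
        exact (lslt_append_left s).1 h3
      rcases lslt_cases hpr with ⟨q', a', b', p₂, r₂, hp1, hr1, hab'⟩ | ⟨t', ht', hext'⟩
      · have h3 : LSLt (p ++ s) (r ++ s) := by
          rw [hp1, hr1, List.append_assoc, List.append_assoc]
          exact lslt_of_diff q' hab'
        exact lslt_asymm h3 hrot2
      · have hl := congrArg List.length hext'
        simp at hl
        exact ht' (List.eq_nil_of_length_eq_zero (by omega))
  · -- extension case: impossible by lengths
    exfalso
    have hl := congrArg List.length hext
    simp at hl
    exact ht (List.eq_nil_of_length_eq_zero (by omega))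

/-- Lemma B: a nonempty word greater than all its proper nonempty suffixes is an ALSW. -/
theorem isALSW_of_suffixes {u : List X} (h1 : u ≠ [])
    (h2 : ∀ p s : List X, p ≠ [] → s ≠ [] → u = p ++ s → LSLt s u) : IsALSW u := by
  refine ⟨h1, fun a b ha hb hab => ?_⟩
  have hb' : LSLt b (a ++ b) := by
    have := h2 a b ha hb hab
    rwa [hab] at this
  rcases lslt_cases hb' with ⟨q, c, d, b₂, y₂, hb1, hy1, hcd⟩ | ⟨t, ht, hext⟩
  · rw [hy1, hb1, List.append_assoc]
    exact lslt_of_diff q hcd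
  · exfalso
    have hl := congrArg List.length hext
    have hane : 0 < a.length := List.length_pos_iff.2 ha
    simp at hl
    omega

/-- Lemma C: no proper nonempty suffix of `u = v ++ w` is greater than `w`,
when `w` is the longest ALSW proper suffix. -/
theorem not_lslt_longest {v w : List X} (hu : IsALSW (v ++ w))
    (hw : LongestALSWProperSuffix (v ++ w) w) (n : ℕ) :
    ∀ s p : List X, s.length ≤ n → p ≠ [] → s ≠ [] → v ++ w = p ++ s → ¬ LSLt w s := by
  induction n with
  | zero =>
    intro s p hn hp hs _ _
    exact hs (List.eq_nil_of_length_eq_zero (by omega))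
  | succ n ih =>
    intro s p hn hp hs heq hlt
    by_cases hc : ∀ q t : List X, q ≠ [] → t ≠ [] → s = q ++ t → LSLt t s
    · have hsALSW : IsALSW s := isALSW_of_suffixes hs hc
      have hle : s.length ≤ w.length := hw.2.2 s hsALSW ⟨p, hp, heq⟩
      -- then s is a suffix of w : w = r ++ s
      have hvp : v <+: p := by
        refine List.prefix_of_prefix_length_le (List.prefix_append v w) ⟨s, heq.symm⟩ ?_
        have := congrArg List.length heq
        simp at this; omega
      obtain ⟨r, hr⟩ := hvp
      have hwrs : w = r ++ s := by
        have : v ++ w = v ++ (r ++ s) := by rw [heq, ← hr, List.append_assoc]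
        exact List.append_cancel_left this
      rcases eq_or_ne r [] with rfl | hrne
      · simp at hwrs
        rw [hwrs] at hlt
        exact lslt_irrefl s hlt
      · have hsw : LSLt s w := by
          rw [hwrs]
          exact lslt_suffix (by rw [← hwrs]; exact hw.1) hrne hs
        exact lslt_asymm hlt hsw
    · push_neg at hc
      obtain ⟨q, t, hq, ht, hst, hnlt⟩ := hc
      have hts : LSLt s t := by
        rcases lslt_total s t with h0 | h0 | h0
        · exfalso
          have hl := congrArg List.length hst
          rw [h0, List.length_append] at hl
          have hq0 : 0 < q.length := List.length_pos_iff.2 hq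
          omega
        · exact h0
        · exact absurd h0 hnlt
      have hlt' : LSLt w t := lslt_trans _ _ _ hlt hts
      have hlent : t.length ≤ n := by
        have hl := congrArg List.length hst
        rw [List.length_append] at hl
        have hq0 : 0 < q.length := List.length_pos_iff.2 hq
        omega
      exact ih t (p ++ q) hlent (by simp [hp]) ht
        (by rw [heq, hst, List.append_assoc]) hlt'

end Aux

/-- If `u = vw` is an ALSW of length `≥ 2` and `w` is the
longest proper ALSW suffix of `u`, then `v` is an ALSW. -/
theorem alsw_standard_factorization_left {X : Type*} [LinearOrder X]
    (v w : List X) (hu : IsALSW (v ++ w)) (hlen : 2 ≤ (v ++ w).length)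
    (hw : LongestALSWProperSuffix (v ++ w) w) :
    IsALSW v := by
  obtain ⟨hwALSW, ⟨v', hv', heqv⟩, hmax⟩ := hw
  have hw' : LongestALSWProperSuffix (v ++ w) w := ⟨hwALSW, ⟨v', hv', heqv⟩, hmax⟩
  have hvne : v ≠ [] := by
    have : v = v' := List.append_cancel_right heqv
    rw [this]; exact hv'
  apply isALSW_of_suffixes hvne
  intro p s hp hs heq
  have hlens : s.length < v.length := by
    have := congrArg List.length heq
    have hp' : 0 < p.length := List.length_pos_iff.2 hp
    simp at this; omega
  have hkey : LSLt (s ++ w) (v ++ w) := by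
    have hu' : IsALSW (p ++ (s ++ w)) := by
      rwa [← List.append_assoc, ← heq]
    have := lslt_suffix hu' hp (by simp [hs])
    rwa [← List.append_assoc, ← heq] at this
  rcases lslt_cases hkey with ⟨q, a, b, x', y', h1, h2, hab⟩ | ⟨t, ht, hext⟩
  · by_cases hq : q.length + 1 ≤ s.length
    · -- strict letter difference inside s : deduce LSLt s v directly
      have hpre1 : q ++ [a] <+: s ++ w := ⟨x', by simpa using h1.symm⟩
      have hpre2 : q ++ [a] <+: s :=
        List.prefix_of_prefix_length_le hpre1 (List.prefix_append s w) (by simpa using hq)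
      obtain ⟨s₂, hs₂⟩ := hpre2
      have hpre3 : q ++ [b] <+: v ++ w := ⟨y', by simpa using h2.symm⟩
      have hpre4 : q ++ [b] <+: v :=
        List.prefix_of_prefix_length_le hpre3 (List.prefix_append v w)
          (by simp; omega)
      obtain ⟨v₂, hv₂⟩ := hpre4
      rw [← hs₂, ← hv₂]
      have he1 : q ++ [a] ++ s₂ = q ++ a :: s₂ := by simp
      have he2 : q ++ [b] ++ v₂ = q ++ b :: v₂ := by simp
      rw [he1, he2]
      exact lslt_of_diff q hab
    · -- s is a prefix of v : contradiction with maximality of w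
      exfalso
      have hqpre : q <+: s ++ w := ⟨a :: x', h1.symm⟩
      have hsq : s <+: q :=
        List.prefix_of_prefix_length_le (List.prefix_append s w) hqpre (by omega)
      have hsv : s <+: v := by
        refine List.prefix_of_prefix_length_le ?_ (List.prefix_append v w) (le_of_lt hlens)
        exact (hsq.trans ⟨b :: y', h2.symm⟩)
      obtain ⟨v₂, hv₂⟩ := hsv
      have hv₂ne : v₂ ≠ [] := by
        intro h0
        rw [h0] at hv₂
        simp at hv₂
        rw [hv₂] at hlens
        exact lt_irrefl _ hlens
      have hlt : LSLt w (v₂ ++ w) := by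
        have h3 := hkey
        rw [← hv₂, List.append_assoc] at h3
        exact (lslt_append_left s).1 h3
      exact not_lslt_longest hu hw' (v₂ ++ w).length (v₂ ++ w) s le_rfl hs
        (by simp [hv₂ne]) (by rw [← hv₂, List.append_assoc]) hlt
  · -- extension case impossible
    exfalso
    have hl := congrArg List.length hext
    simp at hl
    omega
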